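/- In a weakly idempotent complete additive category, every bounded contractible cochain complex splits; more precisely, if a contractible bounded complex M has leftmost nonzero term M^m with differential d^m : M^m → M^{m+1}, then d^m is a split monomorphism and M is isomorphic to the direct sum of the complex (M^m →(id) M^m, placed in degrees m and m+1 via the cone of id) and a contractible complex of strictly smaller essential length. -/

import Mathlib

open CategoryTheory CategoryTheory.Limits ZeroObject

universe v u

variable (B : Type u) [Category.{v} B] [Preadditive B] [HasZeroObject B]
  [HasBinaryBiproducts B]

noncomputable instance : HasBinaryBiproducts (HomologicalComplex B (ComplexShape.up ℤ)) :=
  HasBinaryBiproducts.of_hasBinaryProducts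

/-- An additive category is weakly idempotent complete if every split monomorphism
gives a direct sum decomposition. -/
def WeaklyIdempotentComplete : Prop :=
  ∀ ⦃X Y : B⦄ (i : X ⟶ Y) (p : Y ⟶ X), i ≫ p = 𝟙 X →
    ∃ (Z : B) (e : Y ≅ X ⊞ Z), i ≫ e.hom = biprod.inl

/-- The split complex with degree `i` term `N i ⊞ N (i + 1)`. -/
noncomputable def splitComplex (N : ℤ → B) : CochainComplex B ℤ :=
  CochainComplex.of (fun i => N i ⊞ N (i + 1))
    (fun _ => biprod.snd ≫ biprod.inl)
    (fun _ => by simp)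

/-- The cone of `id_A`, placed in degrees `m` and `m + 1`. -/
noncomputable def coneOfId (A : B) (m : ℤ) : CochainComplex B ℤ :=
  splitComplex B (fun i => if i = m + 1 then A else 0)

/-! The contracting homotopy `h` satisfies `d^m ≫ h^{m+1} = 𝟙` on `M^m`, because `M^{m-1} = 0`;
so `d^m` is split mono and weak idempotent completeness gives `M^{m+1} ≅ M^m ⊞ Z` with `d^m` the
first inclusion. The projection `M^{m+1} ⟶ M^m` and `𝟙 : M^m ⟶ M^m` define chain maps
`M ⟶ cone(𝟙) ⟶ M` exhibiting the cone as a retract of `M`. The complementary idempotent of `M`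
splits in every degree (with image `0`, `Z`, `M^i` in degrees `m`, `m + 1` and `i ∉ {m, m + 1}`),
and its image is a complement of the cone which, as a retract of `M`, is again contractible. -/

section Preadditive

variable {C : Type*} [Category C] [Preadditive C]

noncomputable def isoBiprodOfTotal {X A N : C} [HasBinaryBiproduct A N] (i₁ : A ⟶ X)
    (p₁ : X ⟶ A) (i₂ : N ⟶ X) (p₂ : X ⟶ N) (h₁ : i₁ ≫ p₁ = 𝟙 A) (h₂ : i₂ ≫ p₂ = 𝟙 N)
    (total : p₁ ≫ i₁ + p₂ ≫ i₂ = 𝟙 X) : X ≅ A ⊞ N where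
  hom := biprod.lift p₁ p₂
  inv := biprod.desc i₁ i₂
  hom_inv_id := by rw [biprod.lift_desc, total]
  inv_hom_id := by
    have h₁₂ : i₁ ≫ p₂ = 0 := by
      simpa [Preadditive.comp_add, Preadditive.add_comp, reassoc_of% h₁, h₂]
        using i₁ ≫= total =≫ p₂
    have h₂₁ : i₂ ≫ p₁ = 0 := by
      simpa [Preadditive.comp_add, Preadditive.add_comp, reassoc_of% h₂, h₁]
        using i₂ ≫= total =≫ p₁
    ext <;> simp [h₁, h₂, h₁₂, h₂₁]

theorem CochainComplex.d_comp_hom_eq_id_of_isZero {K : CochainComplex C ℤ}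
    (h : Homotopy (𝟙 K) 0) {m : ℤ} (hm : IsZero (K.X (m - 1))) :
    K.d m (m + 1) ≫ h.hom (m + 1) m = 𝟙 (K.X m) := by
  have hc := h.comm m
  rw [dNext_eq h.hom (show (ComplexShape.up ℤ).Rel m (m + 1) from rfl),
    prevD_eq h.hom (show (ComplexShape.up ℤ).Rel (m - 1) m by simp),
    hm.eq_of_tgt (h.hom m (m - 1)) 0] at hc
  simpa using hc.symm

theorem CochainComplex.comp_d_eq_zero_of_comp_d_eq {K : CochainComplex C ℤ} {N : ℤ → C}
    {a : ∀ i, N i ⟶ K.X i} {ψ : ∀ i, N (i + 1) ⟶ K.X i}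
    (h : ∀ i, ψ i ≫ K.d i (i + 1) = a (i + 1)) (i : ℤ) : a i ≫ K.d i (i + 1) = 0 := by
  obtain ⟨j, rfl⟩ : ∃ j, i = j + 1 := ⟨i - 1, by omega⟩
  rw [← h j, Category.assoc, K.d_comp_d, comp_zero]

end Preadditive

theorem isZero_ite {C : Type*} [Category C] [HasZeroObject C] {A : C} {P : Prop} [Decidable P]
    (hP : ¬P) : IsZero (if P then A else 0) := by
  rw [if_neg hP]
  exact isZero_zero C

namespace HomologicalComplex

variable {C : Type*} [Category C] [Preadditive C] {ι : Type*} {c : ComplexShape ι}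

def homotopyIdZeroOfRetract {K L : HomologicalComplex C c} (i : K ⟶ L) (r : L ⟶ K)
    (hir : i ≫ r = 𝟙 K) (hL : Homotopy (𝟙 L) 0) : Homotopy (𝟙 K) 0 :=
  (Homotopy.ofEq (by simp [hir])).trans
    (((hL.compRight r).compLeft i).trans (Homotopy.ofEq (by simp)))

section Summand

variable (K : HomologicalComplex C c) (p : K ⟶ K) (Y : ι → C)
  (r : ∀ i, K.X i ⟶ Y i) (s : ∀ i, Y i ⟶ K.X i)
  (hrs : ∀ i, r i ≫ s i = p.f i) (hsr : ∀ i, s i ≫ r i = 𝟙 (Y i))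

def summand : HomologicalComplex C c where
  X := Y
  d i j := s i ≫ K.d i j ≫ r j
  shape i j h := by rw [K.shape i j h, zero_comp, comp_zero]
  d_comp_d' i j k _ _ := by
    simp only [Category.assoc, reassoc_of% hrs, ← p.comm_assoc, K.d_comp_d_assoc, zero_comp,
      comp_zero]

def summandπ : K ⟶ summand K p Y r s hrs where
  f := r
  comm' i j _ := by
    change r i ≫ s i ≫ K.d i j ≫ r j = K.d i j ≫ r j
    rw [reassoc_of% hrs, p.comm_assoc, ← hrs, Category.assoc, hsr, Category.comp_id]

def summandι : summand K p Y r s hrs ⟶ K where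
  f := s
  comm' i j _ := by
    change s i ≫ K.d i j = (s i ≫ K.d i j ≫ r j) ≫ s j
    rw [Category.assoc, Category.assoc, hrs, ← p.comm, ← hrs]
    simp only [Category.assoc, reassoc_of% hsr]

theorem summandι_π : summandι K p Y r s hrs hsr ≫ summandπ K p Y r s hrs hsr = 𝟙 _ := by
  ext i
  exact hsr i

theorem summandπ_ι : summandπ K p Y r s hrs hsr ≫ summandι K p Y r s hrs hsr = p := by
  ext i
  exact hrs i

end Summand

end HomologicalComplex

namespace splitComplex

variable {C : Type*} [Category C] [Preadditive C] [HasBinaryBiproducts C] (N : ℤ → C)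
  {K : CochainComplex C ℤ}

theorem X_eq (i : ℤ) : (splitComplex C N).X i = (N i ⊞ N (i + 1)) := rfl

theorem d_eq (i : ℤ) : (splitComplex C N).d i (i + 1) = biprod.snd ≫ biprod.inl := by
  simp [splitComplex]

noncomputable def lift (φ : ∀ i, K.X i ⟶ N i) : K ⟶ splitComplex C N where
  f i := biprod.lift (φ i) (K.d i (i + 1) ≫ φ (i + 1))
  comm' := by
    rintro i _ rfl
    dsimp only [X_eq]
    ext <;> simp [d_eq]

noncomputable def desc (a : ∀ i, N i ⟶ K.X i) (ψ : ∀ i, N (i + 1) ⟶ K.X i)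
    (h : ∀ i, ψ i ≫ K.d i (i + 1) = a (i + 1)) : splitComplex C N ⟶ K where
  f i := biprod.desc (a i) (ψ i)
  comm' := by
    rintro i _ rfl
    dsimp only [X_eq]
    ext <;> simp [d_eq, CochainComplex.comp_d_eq_zero_of_comp_d_eq h, h]

variable {N} {φ : ∀ i, K.X i ⟶ N i} {a : ∀ i, N i ⟶ K.X i} {ψ : ∀ i, N (i + 1) ⟶ K.X i}
  {h : ∀ i, ψ i ≫ K.d i (i + 1) = a (i + 1)}

theorem desc_comp_lift (ha : ∀ i, a i ≫ φ i = 𝟙 (N i)) (hψ : ∀ i, ψ i ≫ φ i = 0) :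
    desc N a ψ h ≫ lift N φ = 𝟙 _ := by
  ext i : 1
  dsimp only [HomologicalComplex.comp_f, HomologicalComplex.id_f, X_eq]
  apply biprod.hom_ext' <;> apply biprod.hom_ext <;>
    simp [desc, lift, ha, hψ, reassoc_of% h,
      reassoc_of% (CochainComplex.comp_d_eq_zero_of_comp_d_eq h i)]

theorem lift_comp_desc_f (i : ℤ) :
    (lift N φ ≫ desc N a ψ h).f i = φ i ≫ a i + K.d i (i + 1) ≫ φ (i + 1) ≫ ψ i := by
  dsimp only [HomologicalComplex.comp_f, desc, lift, X_eq]
  simp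

end splitComplex

namespace coneOfId

variable {C : Type*} [Category C] [Preadditive C] [HasZeroObject C] [HasBinaryBiproducts C]
  {K : CochainComplex C ℤ} {A : C} {m : ℤ}

noncomputable def lift (g : K.X (m + 1) ⟶ A) : K ⟶ coneOfId C A m :=
  splitComplex.lift _ fun i =>
    if h : i = m + 1 then (K.XIsoOfEq h).hom ≫ g ≫ eqToHom (if_pos h).symm else 0

noncomputable def desc (f : A ⟶ K.X m) : coneOfId C A m ⟶ K :=
  splitComplex.desc _ (fun i => if h : i = m + 1 then eqToHom (if_pos h) ≫ f ≫ K.d m i else 0)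
    (fun i => if h : i + 1 = m + 1 then eqToHom (if_pos h) ≫ f ≫ (K.XIsoOfEq (by omega)).hom
      else 0)
    (fun i => by
      split_ifs with h
      · obtain rfl : i = m := by omega
        simp
      · simp)

theorem desc_comp_lift {f : A ⟶ K.X m} {g : K.X (m + 1) ⟶ A}
    (hfg : f ≫ K.d m (m + 1) ≫ g = 𝟙 A) : desc f ≫ lift g = 𝟙 _ := by
  refine splitComplex.desc_comp_lift (fun i => ?_) (fun i => ?_)
  · by_cases h : i = m + 1
    · subst h
      simp [reassoc_of% hfg]
    · exact (isZero_ite h).eq_of_src _ _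
  · by_cases h : i = m
    · subst h
      simp
    · simp [h]

theorem lift_f_comp_desc_f_self (f : A ⟶ K.X m) (g : K.X (m + 1) ⟶ A) :
    (lift g).f m ≫ (desc f).f m = K.d m (m + 1) ≫ g ≫ f := by
  refine (splitComplex.lift_comp_desc_f (N := fun i => if i = m + 1 then A else 0) m).trans ?_
  simp

theorem lift_f_comp_desc_f_succ (f : A ⟶ K.X m) (g : K.X (m + 1) ⟶ A) :
    (lift g).f (m + 1) ≫ (desc f).f (m + 1) = g ≫ f ≫ K.d m (m + 1) := by
  refine (splitComplex.lift_comp_desc_f (N := fun i => if i = m + 1 then A else 0) _).trans ?_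
  simp

theorem lift_f_comp_desc_f_of_ne (f : A ⟶ K.X m) (g : K.X (m + 1) ⟶ A) {i : ℤ} (h₀ : i ≠ m)
    (h₁ : i ≠ m + 1) : (lift g).f i ≫ (desc f).f i = 0 := by
  refine (splitComplex.lift_comp_desc_f (N := fun i => if i = m + 1 then A else 0) _).trans ?_
  simp [h₀, h₁]

end coneOfId

namespace coneComplement

variable {C : Type*} [Category C] [Preadditive C] [HasZeroObject C]
  {K : CochainComplex C ℤ} {m : ℤ} {Z : C}

variable (K m Z) in
noncomputable def X (i : ℤ) : C := if i = m then 0 else if i = m + 1 then Z else K.X i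

theorem X_succ_eq : X K m Z (m + 1) = Z := by simp [X]

theorem X_eq_of_ne {i : ℤ} (h₀ : i ≠ m) (h₁ : i ≠ m + 1) : X K m Z i = K.X i := by
  simp [X, h₀, h₁]

variable [HasBinaryBiproducts C] (e : K.X (m + 1) ≅ K.X m ⊞ Z)

noncomputable def π (i : ℤ) : K.X i ⟶ X K m Z i :=
  if h₀ : i = m then 0
  else if h₁ : i = m + 1 then
    (K.XIsoOfEq h₁).hom ≫ e.hom ≫ biprod.snd ≫ eqToHom (by subst h₁; exact X_succ_eq.symm)
  else eqToHom (X_eq_of_ne h₀ h₁).symm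

noncomputable def ι (i : ℤ) : X K m Z i ⟶ K.X i :=
  if h₀ : i = m then 0
  else if h₁ : i = m + 1 then
    eqToHom (by subst h₁; exact X_succ_eq) ≫ biprod.inr ≫ e.inv ≫ (K.XIsoOfEq h₁.symm).hom
  else eqToHom (X_eq_of_ne h₀ h₁)

theorem ι_comp_π (i : ℤ) : ι e i ≫ π e i = 𝟙 _ := by
  by_cases h₀ : i = m
  · subst h₀
    exact (show IsZero (X K i Z i) by simpa [X] using isZero_zero C).eq_of_src _ _
  by_cases h₁ : i = m + 1
  · subst h₁
    simp [ι, π, h₀]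
  · simp [ι, π, h₀, h₁]

variable {e} in
theorem π_comp_ι (hd : K.d m (m + 1) ≫ e.hom = biprod.inl) (i : ℤ) :
    π e i ≫ ι e i =
      (𝟙 K - coneOfId.lift (e.hom ≫ biprod.fst) ≫ coneOfId.desc (𝟙 (K.X m))).f i := by
  by_cases h₀ : i = m
  · subst h₀
    simp [π, ι, coneOfId.lift_f_comp_desc_f_self, reassoc_of% hd]
  by_cases h₁ : i = m + 1
  · subst h₁
    have hd' : K.d m (m + 1) = biprod.inl ≫ e.inv := by simp [← hd]
    have total : e.hom ≫ (biprod.fst ≫ biprod.inl + biprod.snd ≫ biprod.inr) ≫ e.inv = 𝟙 _ := by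
      simp
    simpa [π, ι, h₀, coneOfId.lift_f_comp_desc_f_succ, hd', eq_sub_iff_add_eq,
      Preadditive.comp_add, Preadditive.add_comp, add_comm] using total
  · simp [π, ι, h₀, h₁, coneOfId.lift_f_comp_desc_f_of_ne _ _ h₀ h₁]

end coneComplement

section Decomposition

variable {C : Type*} [Category C] [Preadditive C] [HasZeroObject C] [HasBinaryBiproducts C]
  {K : CochainComplex C ℤ} {m : ℤ} {Z : C} {e : K.X (m + 1) ≅ K.X m ⊞ Z}

noncomputable abbrev coneComplement (hd : K.d m (m + 1) ≫ e.hom = biprod.inl) :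
    CochainComplex C ℤ :=
  K.summand _ (coneComplement.X K m Z) (coneComplement.π e) (coneComplement.ι e)
    (coneComplement.π_comp_ι hd)

variable (hd : K.d m (m + 1) ≫ e.hom = biprod.inl)

theorem coneComplement.isZero_X_self : IsZero ((coneComplement hd).X m) := by
  simpa [HomologicalComplex.summand, coneComplement.X] using isZero_zero C

theorem coneComplement.isZero_X_of_isZero {i : ℤ} (hi : IsZero (K.X i)) :
    IsZero ((coneComplement hd).X i) := by
  by_cases h₀ : i = m
  · subst h₀
    exact coneComplement.isZero_X_self hd
  by_cases h₁ : i = m + 1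
  · subst h₁
    simpa [HomologicalComplex.summand, coneComplement.X]
      using ((biprod_isZero_iff _ _).1 (hi.of_iso e.symm)).2
  · simpa [HomologicalComplex.summand, coneComplement.X, h₀, h₁] using hi

noncomputable def coneComplement.isoBiprod : K ≅ coneOfId C (K.X m) m ⊞ coneComplement hd :=
  isoBiprodOfTotal (coneOfId.desc (𝟙 _)) (coneOfId.lift (e.hom ≫ biprod.fst))
    (K.summandι _ _ _ _ _ (coneComplement.ι_comp_π e))
    (K.summandπ _ _ _ _ _ (coneComplement.ι_comp_π e))
    (coneOfId.desc_comp_lift (by simp [reassoc_of% hd]))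
    (K.summandι_π _ _ _ _ _ _) (by rw [HomologicalComplex.summandπ_ι, add_sub_cancel])

noncomputable def coneComplement.homotopyIdZero (h : Homotopy (𝟙 K) 0) :
    Homotopy (𝟙 (coneComplement hd)) 0 :=
  HomologicalComplex.homotopyIdZeroOfRetract _ _
    (K.summandι_π _ _ _ _ _ (coneComplement.ι_comp_π e)) h

end Decomposition

theorem contractible_bounded_complex_splits_off_cone
    (hB : WeaklyIdempotentComplete B)
    (M : CochainComplex B ℤ) (m n : ℤ)
    (hlow : ∀ i : ℤ, i < m → IsZero (M.X i))
    (hhigh : ∀ i : ℤ, n < i → IsZero (M.X i))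
    (hcontr : Nonempty (Homotopy (𝟙 M) 0)) :
    (∃ s : M.X (m + 1) ⟶ M.X m, M.d m (m + 1) ≫ s = 𝟙 (M.X m)) ∧
    ∃ M' : CochainComplex B ℤ,
      (∀ i : ℤ, i ≤ m → IsZero (M'.X i)) ∧ (∀ i : ℤ, n < i → IsZero (M'.X i)) ∧
      Nonempty (Homotopy (𝟙 M') 0) ∧
      Nonempty (M ≅ coneOfId B (M.X m) m ⊞ M') := by
  obtain ⟨h⟩ := hcontr
  have hs := CochainComplex.d_comp_hom_eq_id_of_isZero h (hlow (m - 1) (by omega))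
  obtain ⟨Z, e, hd⟩ := hB _ _ hs
  refine ⟨⟨_, hs⟩, coneComplement hd, fun i hi => ?_,
    fun i hi => coneComplement.isZero_X_of_isZero hd (hhigh i hi),
    ⟨coneComplement.homotopyIdZero hd h⟩, ⟨coneComplement.isoBiprod hd⟩⟩
  rcases hi.lt_or_eq with hi | rfl
  · exact coneComplement.isZero_X_of_isZero hd (hlow i hi)
  · exact coneComplement.isZero_X_self hd
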